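/- arXiv:math/0001108 — 5 statements merged into one kernel-verified Lean document; each statement's English description precedes it below -/
import Mathlib

section
/- For every n, m, k ∈ ℕ and every C > 0 there exists D > 0 (depending only on n, m, k, C) with the following property. Let A : ℝᵐ → Matrix (Fin n) (Fin n) ℝ be k-times continuously differentiable on a neighborhood of a point x ∈ ℝᵐ, such that A y is invertible for all y in a neighborhood of x. If ‖iteratedFDeriv ℝ i A x‖ ≤ C for all i ≤ k and ‖(A x)⁻¹‖ ≤ C, then ‖iteratedFDeriv ℝ k (fun y ↦ (A y)⁻¹) x‖ ≤ D. -/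
attribute [local instance] Matrix.linftyOpNormedAddCommGroup Matrix.linftyOpNormedSpace
  Matrix.linftyOpNormedRing Matrix.linftyOpNormedAlgebra

/-!
Write `B = A⁻¹`. Differentiating `A B = 1` gives `DB = -B (DA) B`, so `D^{k+1} B` is `D^k` of two
nested bilinear products of `B`, `B` and `DA`. By the Leibniz rule, `D^k` of a bilinear product of
norm at most one is bounded by `2^k` times the bounds on the derivatives of its factors up to
order `k`; those of `B` are bounded by induction on `k`.
-/

open ContinuousLinearMap Finset Ring

variable {𝕜 E F G H R : Type*} [NontriviallyNormedField 𝕜]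
  [NormedAddCommGroup E] [NormedSpace 𝕜 E] [NormedAddCommGroup F] [NormedSpace 𝕜 F]
  [NormedAddCommGroup G] [NormedSpace 𝕜 G] [NormedAddCommGroup H] [NormedSpace 𝕜 H]

theorem ContinuousLinearMap.norm_iteratedFDerivWithin_le_two_pow_mul_of_bilinear_of_le_one
    (B : F →L[𝕜] G →L[𝕜] H) {f : E → F} {g : E → G} {s : Set E} {x : E} {n : ℕ} {a b : ℝ}
    (hf : ContDiffOn 𝕜 n f s) (hg : ContDiffOn 𝕜 n g s) (hs : UniqueDiffOn 𝕜 s) (hx : x ∈ s)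
    (hB : ‖B‖ ≤ 1) (hfa : ∀ i ≤ n, ‖iteratedFDerivWithin 𝕜 i f s x‖ ≤ a)
    (hgb : ∀ i ≤ n, ‖iteratedFDerivWithin 𝕜 i g s x‖ ≤ b) :
    ∀ i ≤ n, ‖iteratedFDerivWithin 𝕜 i (fun y => B (f y) (g y)) s x‖ ≤ 2 ^ n * a * b := by
  intro i hi
  have ha : 0 ≤ a := (norm_nonneg _).trans (hfa 0 n.zero_le)
  calc ‖iteratedFDerivWithin 𝕜 i (fun y => B (f y) (g y)) s x‖
      ≤ ∑ j ∈ range (i + 1), (i.choose j : ℝ) * ‖iteratedFDerivWithin 𝕜 j f s x‖ *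
          ‖iteratedFDerivWithin 𝕜 (i - j) g s x‖ :=
        B.norm_iteratedFDerivWithin_le_of_bilinear_of_le_one hf hg hs hx (by exact_mod_cast hi) hB
    _ ≤ ∑ j ∈ range (i + 1), (i.choose j : ℝ) * a * b := by
        gcongr with j hj
        · exact hfa j (by grind)
        · exact hgb (i - j) (by omega)
    _ = 2 ^ i * a * b := by
        rw [← sum_mul, ← sum_mul, ← Nat.cast_sum, Nat.sum_range_choose, Nat.cast_pow,
          Nat.cast_ofNat]
    _ ≤ 2 ^ n * a * b := by
        have hb : 0 ≤ b := (norm_nonneg _).trans (hgb 0 n.zero_le)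
        gcongr
        · norm_num

section RingInverse

variable [NormedRing R] [NormedAlgebra 𝕜 R] [HasSummableGeomSeries R]

theorem HasFDerivWithinAt.ringInverse {A : E → R} {A' : E →L[𝕜] R} {s : Set E} {y : E}
    (hA : HasFDerivWithinAt A A' s y) (hy : IsUnit (A y)) :
    HasFDerivWithinAt (fun z => (A z)⁻¹ʳ)
      (-(mulLeftRight 𝕜 R (A y)⁻¹ʳ (A y)⁻¹ʳ).comp A') s y := by
  obtain ⟨u, hu⟩ := hy
  have hinv := hasFDerivAt_ringInverse (𝕜 := 𝕜) u
  rw [← inverse_unit, hu] at hinv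
  exact hinv.comp_hasFDerivWithinAt y hA

theorem ContDiffOn.ringInverse {A : E → R} {s : Set E} {n : WithTop ℕ∞}
    (hA : ContDiffOn 𝕜 n A s) (hU : ∀ y ∈ s, IsUnit (A y)) :
    ContDiffOn 𝕜 n (fun y => (A y)⁻¹ʳ) s := by
  intro y hy
  obtain ⟨u, hu⟩ := hU y hy
  have hinv := contDiffAt_ringInverse 𝕜 (n := n) u
  rw [hu] at hinv
  exact hinv.comp_contDiffWithinAt y (hA y hy)

theorem eqOn_fderivWithin_ringInverse {A : E → R} {s : Set E} (hs : UniqueDiffOn 𝕜 s)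
    (hA : DifferentiableOn 𝕜 A s) (hU : ∀ y ∈ s, IsUnit (A y)) :
    Set.EqOn (fderivWithin 𝕜 (fun y => (A y)⁻¹ʳ) s)
      (-fun y => compL 𝕜 E R R (mulLeftRight 𝕜 R (A y)⁻¹ʳ (A y)⁻¹ʳ) (fderivWithin 𝕜 A s y)) s := by
  intro y hy
  refine (((hA y hy).hasFDerivWithinAt.ringInverse (hU y hy)).fderivWithin (hs y hy)).trans ?_
  ext
  simp

end RingInverse

def inverseDerivBound (C : ℝ) : ℕ → ℝ
  | 0 => C
  | k + 1 => max (inverseDerivBound C k) (4 ^ k * inverseDerivBound C k ^ 2 * C)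

theorem le_inverseDerivBound (C : ℝ) : ∀ k, C ≤ inverseDerivBound C k
  | 0 => le_rfl
  | k + 1 => (le_inverseDerivBound C k).trans (le_max_left _ _)

theorem norm_iteratedFDerivWithin_ringInverse_le [NormedRing R] [NormedAlgebra 𝕜 R]
    [HasSummableGeomSeries R] {A : E → R} {s : Set E} {x : E} {C : ℝ} {k : ℕ}
    (hs : UniqueDiffOn 𝕜 s) (hx : x ∈ s) (hA : ContDiffOn 𝕜 k A s)
    (hU : ∀ y ∈ s, IsUnit (A y)) (hAC : ∀ i ≤ k, ‖iteratedFDerivWithin 𝕜 i A s x‖ ≤ C)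
    (hinv : ‖(A x)⁻¹ʳ‖ ≤ C) :
    ∀ i ≤ k, ‖iteratedFDerivWithin 𝕜 i (fun y => (A y)⁻¹ʳ) s x‖ ≤ inverseDerivBound C k := by
  induction k with
  | zero =>
    intro i hi
    obtain rfl := Nat.le_zero.1 hi
    simpa [inverseDerivBound] using hinv
  | succ k ih =>
    set B : E → R := fun y => (A y)⁻¹ʳ
    set D := inverseDerivBound C k
    have hAk : ContDiffOn 𝕜 k A s := hA.of_le (by exact_mod_cast k.le_succ)
    have hBD : ∀ i ≤ k, ‖iteratedFDerivWithin 𝕜 i B s x‖ ≤ D :=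
      ih hAk fun i hi => hAC i (by omega)
    intro i hi
    rcases Nat.lt_or_eq_of_le hi with hlt | rfl
    · exact (hBD i (by omega)).trans (le_max_left _ _)
    have hBk : ContDiffOn 𝕜 k B s := hAk.ringInverse hU
    have hBBk : ContDiffOn 𝕜 k (fun y => mulLeftRight 𝕜 R (B y) (B y)) s := by fun_prop
    have hDA : ContDiffOn 𝕜 k (fderivWithin 𝕜 A s) s :=
      hA.fderivWithin hs (by exact_mod_cast le_rfl)
    have hBB : ∀ i ≤ k, ‖iteratedFDerivWithin 𝕜 i (fun y => mulLeftRight 𝕜 R (B y) (B y)) s x‖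
        ≤ 2 ^ k * D * D :=
      (mulLeftRight 𝕜 R).norm_iteratedFDerivWithin_le_two_pow_mul_of_bilinear_of_le_one
        hBk hBk hs hx (opNorm_mulLeftRight_le 𝕜 R) hBD hBD
    have hDAC : ∀ i ≤ k, ‖iteratedFDerivWithin 𝕜 i (fderivWithin 𝕜 A s) s x‖ ≤ C := fun i hi =>
      (norm_iteratedFDerivWithin_fderivWithin hs hx).trans_le (hAC (i + 1) (by omega))
    calc ‖iteratedFDerivWithin 𝕜 (k + 1) B s x‖
        = ‖iteratedFDerivWithin 𝕜 k (fderivWithin 𝕜 B s) s x‖ :=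
          (norm_iteratedFDerivWithin_fderivWithin hs hx).symm
      _ = ‖iteratedFDerivWithin 𝕜 k (fun y => compL 𝕜 E R R
            (mulLeftRight 𝕜 R (B y) (B y)) (fderivWithin 𝕜 A s y)) s x‖ := by
          rw [iteratedFDerivWithin_congr
              (eqOn_fderivWithin_ringInverse hs (hA.differentiableOn (by simp)) hU) hx,
            iteratedFDerivWithin_neg_apply hs hx, norm_neg]
      _ ≤ 2 ^ k * (2 ^ k * D * D) * C :=
          (compL 𝕜 E R R).norm_iteratedFDerivWithin_le_two_pow_mul_of_bilinear_of_le_one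
            hBBk hDA hs hx (norm_compL_le 𝕜 E R R) hBB hDAC k le_rfl
      _ = 4 ^ k * D ^ 2 * C := by rw [show (4 : ℝ) = 2 * 2 by norm_num, mul_pow]; ring
      _ ≤ inverseDerivBound C (k + 1) := le_max_right _ _

/-- Quantitative bound for derivatives of the matrix inverse: bounds on the derivatives of `A`
up to order `k` at `x` and on `(A x)⁻¹` give a bound, depending only on `n`, `m`, `k`, `C`, on
the `k`-th derivative of `y ↦ (A y)⁻¹` at `x`. -/
theorem iteratedFDeriv_matrix_inv_bound (n m k : ℕ) (C : ℝ) (hC : 0 < C) :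
    ∃ D > 0, ∀ (A : EuclideanSpace ℝ (Fin m) → Matrix (Fin n) (Fin n) ℝ)
      (x : EuclideanSpace ℝ (Fin m)) (U : Set (EuclideanSpace ℝ (Fin m))),
      U ∈ nhds x → ContDiffOn ℝ k A U →
      (∀ᶠ y in nhds x, IsUnit (A y)) →
      (∀ i ≤ k, ‖iteratedFDeriv ℝ i A x‖ ≤ C) →
      ‖(A x)⁻¹‖ ≤ C →
      ‖iteratedFDeriv ℝ k (fun y => (A y)⁻¹) x‖ ≤ D := by
  refine ⟨inverseDerivBound C k, hC.trans_le (le_inverseDerivBound C k),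
    fun A x U hU hA hunit hAC hinv => ?_⟩
  obtain ⟨s, hsU, hs, hxs⟩ := mem_nhds_iff.1 (Filter.inter_mem hU hunit)
  simp only [Matrix.nonsing_inv_eq_ringInverse] at hinv ⊢
  rw [← iteratedFDerivWithin_of_isOpen k hs hxs]
  refine norm_iteratedFDerivWithin_ringInverse_le hs.uniqueDiffOn hxs
    (hA.mono fun y hy => (hsU hy).1) (fun y hy => (hsU hy).2) (fun i hi => ?_) hinv k le_rfl
  rw [iteratedFDerivWithin_of_isOpen i hs hxs]
  exact hAC i hi
end

section
/- Let m ∈ ℕ, let u : ℝᵐ → ℝ be continuously differentiable and g : ℝᵐ → ℝ continuous, and suppose that for every x ∈ ℝᵐ one has (fderiv ℝ u x) x + u x = g x, i.e. the radial derivative ∑ᵢ xᵢ ∂ᵢu(x) plus u(x) equals g(x). Then for every x ∈ ℝᵐ, u x = ∫ t in (0,1), g (t • x). -/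
/-! By the chain rule and linearity of `fderiv ℝ u (t • x)`, the function `f t = t • u (t • x)`
has derivative `g (t • x)`; since `f 0 = 0`, the fundamental theorem of calculus gives
`u x = f 1 = ∫₀¹ g (t • x) dt`. -/

open MeasureTheory

variable {E F : Type*} [NormedAddCommGroup E] [NormedSpace ℝ E]
  [NormedAddCommGroup F] [NormedSpace ℝ F]

theorem HasFDerivAt.hasDerivAt_smul_comp_smul {u : E → F} {u' : E →L[ℝ] F} {x : E} {t : ℝ}
    (hu : HasFDerivAt u u' (t • x)) :
    HasDerivAt (fun s : ℝ => s • u (s • x)) (u' (t • x) + u (t • x)) t := by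
  have hray : HasDerivAt (fun s : ℝ => s • x) x t := by
    simpa using (hasDerivAt_id t).smul_const x
  refine ((hasDerivAt_id t).smul (hu.comp_hasDerivAt t hray)).congr_deriv ?_
  simp only [id, one_smul, Function.comp_apply, map_smul]

theorem eq_intervalIntegral_of_radial_deriv_add_eq [CompleteSpace F] {u g : E → F}
    (hu : Differentiable ℝ u) (hg : Continuous g) (heq : ∀ y, fderiv ℝ u y y + u y = g y)
    (x : E) : u x = ∫ t in (0 : ℝ)..1, g (t • x) := by
  have hderiv (t : ℝ) : HasDerivAt (fun s : ℝ => s • u (s • x)) (g (t • x)) t :=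
    heq (t • x) ▸ (hu (t • x)).hasFDerivAt.hasDerivAt_smul_comp_smul
  have hint : IntervalIntegrable (fun t : ℝ => g (t • x)) volume 0 1 :=
    (hg.comp (continuous_id.smul continuous_const)).intervalIntegrable 0 1
  rw [intervalIntegral.integral_eq_sub_of_hasDerivAt (fun t _ => hderiv t) hint]
  simp

/-- Integration of the radial differential equation `(𝓡u) + u = g`: any `C¹` solution of
`∑ᵢ xᵢ ∂ᵢ u(x) + u(x) = g(x)` on `ℝᵐ` satisfies `u x = ∫₀¹ g(t x) dt`. -/
theorem radial_ode_integral (m : ℕ) (u g : EuclideanSpace ℝ (Fin m) → ℝ)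
    (hu : ContDiff ℝ 1 u) (hg : Continuous g)
    (heq : ∀ x, fderiv ℝ u x x + u x = g x) :
    ∀ x, u x = ∫ t in Set.Ioo (0:ℝ) 1, g (t • x) := by
  intro x
  rw [← integral_Ioc_eq_integral_Ioo, ← intervalIntegral.integral_of_le zero_le_one]
  exact eq_intervalIntegral_of_radial_deriv_add_eq (hu.differentiable one_ne_zero) hg heq x
end

section
/- Let m ∈ ℕ, let u : ℝᵐ → ℝ be twice continuously differentiable and h : ℝᵐ → ℝ continuous, and suppose that for every x ∈ ℝᵐ one has (𝓡²u)(x) + (𝓡u)(x) = h(x), where (𝓡u)(x) := (fderiv ℝ u x) x is the radial derivative ∑ᵢ xᵢ ∂ᵢu(x) and 𝓡²u = 𝓡(𝓡u). Then for every x ∈ ℝᵐ and every t > 0, (fderiv ℝ u (t • x)) x = t⁻² · ∫ τ in (0,t), h (τ • x). -/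
/-!
Write `v = 𝓡u`. The equation says `𝓡v + v = h`, and along the ray `τ ↦ τ • x` this reads
`d/dτ (τ v(τ x)) = h(τ x)`. Integrating over `[0, t]` gives `t v(t x) = ∫₀ᵗ h(τ x) dτ`, and
`v(t x) = t Du(t x) x` by linearity of `Du(t x)`.
-/

variable {E F : Type*} [NormedAddCommGroup E] [NormedSpace ℝ E]
  [NormedAddCommGroup F] [NormedSpace ℝ F]

noncomputable def radialDeriv (f : E → F) (x : E) : F := fderiv ℝ f x x

theorem radialDeriv_smul (f : E → F) (x : E) (s : ℝ) :
    radialDeriv f (s • x) = s • fderiv ℝ f (s • x) x :=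
  map_smul _ s x

theorem differentiable_radialDeriv {f : E → F} (hf : ContDiff ℝ 2 f) :
    Differentiable ℝ (radialDeriv f) := fun y =>
  ((hf.fderiv_right (by norm_num)).differentiable one_ne_zero y).clm_apply differentiableAt_id

theorem hasDerivAt_smul_comp_smul {g : E → F} {x : E} {s : ℝ}
    (hg : DifferentiableAt ℝ g (s • x)) :
    HasDerivAt (fun τ : ℝ => τ • g (τ • x)) (g (s • x) + radialDeriv g (s • x)) s := by
  have hline : HasDerivAt (fun τ : ℝ => τ • x) x s := by
    simpa using (hasDerivAt_id s).smul_const x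
  have hcomp : HasDerivAt (fun τ : ℝ => g (τ • x)) (fderiv ℝ g (s • x) x) s :=
    hg.hasFDerivAt.comp_hasDerivAt s hline
  convert (hasDerivAt_id' s).fun_smul hcomp using 1
  rw [radialDeriv_smul, one_smul, add_comm]

theorem intervalIntegral_eq_smul_of_radialDeriv_add [CompleteSpace F] {g k : E → F}
    (hg : Differentiable ℝ g) (hk : Continuous k) (heq : ∀ y, radialDeriv g y + g y = k y)
    (x : E) (t : ℝ) : ∫ τ in (0:ℝ)..t, k (τ • x) = t • g (t • x) := by
  have hderiv : ∀ s : ℝ, HasDerivAt (fun τ : ℝ => τ • g (τ • x)) (k (s • x)) s := fun s => by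
    simpa [← heq, add_comm] using hasDerivAt_smul_comp_smul (hg (s • x))
  rw [intervalIntegral.integral_eq_sub_of_hasDerivAt (fun s _ => hderiv s)
    ((hk.comp (continuous_id.smul continuous_const)).intervalIntegrable 0 t)]
  simp

/-- Integration of the radial differential equation `(𝓡² + 𝓡)u = h`: if `u` is `C²` and
`𝓡(𝓡u)(x) + (𝓡u)(x) = h(x)` where `(𝓡u)(x) = (fderiv ℝ u x) x`, then for `t > 0`
`(fderiv ℝ u (t • x)) x = t⁻² ∫₀ᵗ h(τ x) dτ`. -/
theorem radial_ode_second_order (m : ℕ) (u h : EuclideanSpace ℝ (Fin m) → ℝ)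
    (hu : ContDiff ℝ 2 u) (hh : Continuous h)
    (heq : ∀ x, fderiv ℝ (fun y => fderiv ℝ u y y) x x + fderiv ℝ u x x = h x) :
    ∀ (x : EuclideanSpace ℝ (Fin m)) (t : ℝ), 0 < t →
      fderiv ℝ u (t • x) x = (t ^ 2)⁻¹ * ∫ τ in Set.Ioo (0:ℝ) t, h (τ • x) := by
  intro x t ht
  rw [← MeasureTheory.integral_Ioc_eq_integral_Ioo, ← intervalIntegral.integral_of_le ht.le,
    intervalIntegral_eq_smul_of_radialDeriv_add (differentiable_radialDeriv hu) hh heq,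
    radialDeriv_smul, smul_eq_mul, smul_eq_mul]
  field_simp
end

section
/- Let m, k ∈ ℕ and let g : ℝᵐ → ℝ be k-times continuously differentiable. Define u : ℝᵐ → ℝ by u x = ∫ t in (0,1), g (t • x). Then u is k-times continuously differentiable, and for every x ∈ ℝᵐ and all vectors v₁, …, v_k ∈ ℝᵐ, iteratedFDeriv ℝ k u x (v₁, …, v_k) = ∫ t in (0,1), t^k · iteratedFDeriv ℝ k g (t • x) (v₁, …, v_k). -/
/-!
Write `R_j g x = ∫₀¹ tʲ g(t x) dt`. On the compact parameter interval the integrand and its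
`x`-derivative `t^(j+1) Dg(t x)` are jointly continuous, so one may differentiate under the integral
sign: `D (R_j g) = R_{j+1} (D g)`, the extra factor `t` coming from the chain rule. Iterating gives
`Dᵏ (R_j g) = R_{k+j} (Dᵏ g)`, which is continuous, and `u = R_0 g`.
-/

open MeasureTheory Set

theorem hasFDerivAt_setIntegral_of_continuous_fderiv
    {H Y E : Type*} [NormedAddCommGroup H] [NormedSpace ℝ H] [LocallyCompactSpace H]
    [TopologicalSpace Y] [T2Space Y] [SecondCountableTopology Y] [MeasurableSpace Y]
    [OpensMeasurableSpace Y]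
    [NormedAddCommGroup E] [NormedSpace ℝ E]
    {μ : Measure Y} [IsFiniteMeasureOnCompacts μ]
    {f : H → Y → E} {f' : H → Y → H →L[ℝ] E} (hf : ∀ x y, HasFDerivAt (f · y) (f' x y) x)
    (hf_cont : ∀ x, Continuous (f x)) (hf' : Continuous f'.uncurry)
    {s : Set Y} (hs : IsCompact s) (x₀ : H) :
    HasFDerivAt (fun x ↦ ∫ y in s, f x y ∂μ) (∫ y in s, f' x₀ y ∂μ) x₀ := by
  obtain ⟨U, hU, hUx₀⟩ := exists_compact_mem_nhds x₀
  obtain ⟨C, hC⟩ := (hU.prod hs).bddAbove_image hf'.norm.continuousOn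
  refine hasFDerivAt_integral_of_dominated_of_fderiv_le (bound := fun _ ↦ C) hUx₀
    (.of_forall fun x ↦ (hf_cont x).aestronglyMeasurable)
    ((hf_cont x₀).continuousOn.integrableOn_compact hs)
    (hf'.comp (Continuous.prodMk_right x₀)).aestronglyMeasurable ?_
    (integrableOn_const hs.measure_ne_top) (.of_forall fun y x _ ↦ hf x y)
  exact ae_restrict_of_forall_mem hs.measurableSet fun y hy x hx ↦
    hC (mem_image_of_mem _ (mk_mem_prod hx hy))

section RadialIntegral

variable {E F G : Type*} [NormedAddCommGroup E] [NormedSpace ℝ E] [NormedAddCommGroup F]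
  [NormedSpace ℝ F] [NormedAddCommGroup G] [NormedSpace ℝ G]

noncomputable def radialIntegral (j : ℕ) (g : E → F) (x : E) : F :=
  ∫ t in Icc (0 : ℝ) 1, t ^ j • g (t • x)

theorem LinearIsometryEquiv.comp_radialIntegral (L : F ≃ₗᵢ[ℝ] G) (j : ℕ) (g : E → F) :
    L ∘ radialIntegral j g = radialIntegral j (L ∘ g) := by
  ext x
  simp only [Function.comp_apply, radialIntegral]
  simpa using (L.toContinuousLinearEquiv.integral_comp_comm
    (μ := volume.restrict (Icc (0 : ℝ) 1)) fun t ↦ t ^ j • g (t • x)).symm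

theorem continuous_radialIntegral [LocallyCompactSpace E] (j : ℕ) {g : E → F}
    (hg : Continuous g) : Continuous (radialIntegral j g) :=
  continuous_parametric_integral_of_continuous (by fun_prop) isCompact_Icc

theorem hasFDerivAt_pow_smul_comp_smul (j : ℕ) {g : E → F} {t : ℝ} {x : E}
    (hg : DifferentiableAt ℝ g (t • x)) :
    HasFDerivAt (fun x ↦ t ^ j • g (t • x)) (t ^ (j + 1) • fderiv ℝ g (t • x)) x := by
  have h := (hg.hasFDerivAt.comp x ((hasFDerivAt_id x).const_smul t)).const_smul (t ^ j)
  refine h.congr_fderiv ?_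
  ext v
  simp [pow_succ, mul_smul]

theorem hasFDerivAt_radialIntegral [LocallyCompactSpace E] (j : ℕ) {g : E → F}
    (hg : ContDiff ℝ 1 g) (x : E) :
    HasFDerivAt (radialIntegral j g) (radialIntegral (j + 1) (fderiv ℝ g) x) x :=
  hasFDerivAt_setIntegral_of_continuous_fderiv
    (fun x t ↦ hasFDerivAt_pow_smul_comp_smul j (hg.differentiable one_ne_zero _))
    (fun x ↦ by have := hg.continuous; fun_prop)
    (by have := hg.continuous_fderiv one_ne_zero; fun_prop) isCompact_Icc x

theorem fderiv_radialIntegral [LocallyCompactSpace E] (j : ℕ) {g : E → F}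
    (hg : ContDiff ℝ 1 g) : fderiv ℝ (radialIntegral j g) = radialIntegral (j + 1) (fderiv ℝ g) :=
  funext fun x ↦ (hasFDerivAt_radialIntegral j hg x).fderiv

theorem iteratedFDeriv_radialIntegral [LocallyCompactSpace E] (j : ℕ) {n : ℕ} {g : E → F}
    (hg : ContDiff ℝ n g) :
    iteratedFDeriv ℝ n (radialIntegral j g) = radialIntegral (n + j) (iteratedFDeriv ℝ n g) := by
  induction n with
  | zero =>
    rw [iteratedFDeriv_zero_eq_comp, iteratedFDeriv_zero_eq_comp,
      LinearIsometryEquiv.comp_radialIntegral, zero_add]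
  | succ n ih =>
    rw [iteratedFDeriv_succ_eq_comp_left, iteratedFDeriv_succ_eq_comp_left, ih hg.of_succ,
      fderiv_radialIntegral _ (hg.iteratedFDeriv_right (by push_cast; rw [add_comm])),
      Nat.add_right_comm n 1 j]
    -- the normed-group instances of the curried spaces are not found by unification
    exact LinearIsometryEquiv.comp_radialIntegral (E := E) (F := E →L[ℝ] E [×n]→L[ℝ] F)
      (G := E [×n+1]→L[ℝ] F) _ _ _

theorem contDiff_radialIntegral [LocallyCompactSpace E] (j : ℕ) {n : ℕ} {g : E → F}
    (hg : ContDiff ℝ n g) : ContDiff ℝ n (radialIntegral j g) := by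
  refine contDiff_nat_iff_continuous_differentiable.2 ⟨fun m hm ↦ ?_, fun m hm ↦ ?_⟩
  · rw [iteratedFDeriv_radialIntegral j (hg.of_le (by exact_mod_cast hm))]
    exact continuous_radialIntegral _ (hg.continuous_iteratedFDeriv (by exact_mod_cast hm))
  · rw [iteratedFDeriv_radialIntegral j (hg.of_le (by exact_mod_cast hm.le))]
    exact fun x ↦ (hasFDerivAt_radialIntegral _
      (hg.iteratedFDeriv_right (by exact_mod_cast (by omega : 1 + m ≤ n))) x).differentiableAt

end RadialIntegral

/-- Differentiation under the integral sign for the radial integral representation: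
if `g` is `Cᵏ` and `u x = ∫₀¹ g(t x) dt`, then `u` is `Cᵏ` and
`D^k u(x)(v₁,…,v_k) = ∫₀¹ tᵏ D^k g(t x)(v₁,…,v_k) dt`. -/
theorem contDiff_radial_integral (m k : ℕ) (g : EuclideanSpace ℝ (Fin m) → ℝ)
    (hg : ContDiff ℝ k g)
    (u : EuclideanSpace ℝ (Fin m) → ℝ)
    (hu : ∀ x, u x = ∫ t in Set.Ioo (0:ℝ) 1, g (t • x)) :
    ContDiff ℝ k u ∧
      ∀ (x : EuclideanSpace ℝ (Fin m)) (v : Fin k → EuclideanSpace ℝ (Fin m)),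
        iteratedFDeriv ℝ k u x v =
          ∫ t in Set.Ioo (0:ℝ) 1, t ^ k * iteratedFDeriv ℝ k g (t • x) v := by
  have hu_eq : u = radialIntegral 0 g := by
    ext x
    simp [hu, radialIntegral, integral_Icc_eq_integral_Ioo]
  subst hu_eq
  refine ⟨contDiff_radialIntegral 0 hg, fun x v ↦ ?_⟩
  have hint : IntegrableOn (fun t : ℝ ↦ t ^ k • iteratedFDeriv ℝ k g (t • x)) (Icc 0 1) := by
    have := hg.continuous_iteratedFDeriv le_rfl
    exact Continuous.integrableOn_Icc (by fun_prop)
  rw [iteratedFDeriv_radialIntegral 0 hg, add_zero, radialIntegral,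
    ← integral_Icc_eq_integral_Ioo, ContinuousMultilinearMap.integral_apply hint]
  simp
end

section
/- Let n ∈ ℕ, T > 0, L ≥ 0. Let F : ℝ × ℝⁿ → ℝⁿ be continuously differentiable with ‖fderiv ℝ (fun y ↦ F (t, y)) y‖ ≤ L for all t ∈ [0,T] and all y ∈ ℝⁿ. Let φ : ℝ × ℝⁿ → ℝⁿ be continuously differentiable with φ (0, x) = x for all x ∈ ℝⁿ and with ∂φ/∂t (t, x) = F (t, φ (t, x)) for all t ∈ [0,T] and x ∈ ℝⁿ. Then for every x₀ ∈ ℝⁿ and every t ∈ [0,T], ‖fderiv ℝ (fun x ↦ φ (t, x)) x₀‖ ≤ exp (L · t). -/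
/-! The spatial derivative of `φ(t, ·)` is bounded by its Lipschitz constant, and the Lipschitz
constant of the time-`t` map of an ODE whose vector field is `L`-Lipschitz in space is at most
`exp (L t)` by Grönwall's inequality. The Lipschitz bound on the vector field comes from the mean
value inequality. -/

open Set

theorem dist_flow_le_dist_mul_exp {E : Type*} [NormedAddCommGroup E] [NormedSpace ℝ E]
    {v : ℝ → E → E} {φ : ℝ × E → E} {K : NNReal} {T : ℝ}
    (hv : ∀ t ∈ Ico 0 T, LipschitzWith K (v t))
    (hφt : ∀ t ∈ Icc 0 T, ∀ x, HasDerivAt (fun τ => φ (τ, x)) (v t (φ (t, x))) t)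
    (hφ0 : ∀ x, φ (0, x) = x) {t : ℝ} (ht : t ∈ Icc 0 T) (x y : E) :
    dist (φ (t, x)) (φ (t, y)) ≤ dist x y * Real.exp (K * t) := by
  have hcont : ∀ z, ContinuousOn (fun τ => φ (τ, z)) (Icc 0 T) := fun z τ hτ =>
    (hφt τ hτ z).continuousAt.continuousWithinAt
  have hderiv : ∀ z, ∀ τ ∈ Ico 0 T,
      HasDerivWithinAt (fun τ => φ (τ, z)) (v τ (φ (τ, z))) (Ici τ) τ := fun z τ hτ =>
    (hφt τ (Ico_subset_Icc_self hτ) z).hasDerivWithinAt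
  simpa using dist_le_of_trajectories_ODE_of_mem (s := fun _ => univ)
    (fun τ hτ => (hv τ hτ).lipschitzOnWith) (hcont x) (hderiv x) (fun _ _ => trivial)
    (hcont y) (hderiv y) (fun _ _ => trivial) (by rw [hφ0 x, hφ0 y]) t ht

theorem flow_fderiv_exp_bound_general (n : ℕ) (T L : ℝ)
    (F : ℝ × EuclideanSpace ℝ (Fin n) → EuclideanSpace ℝ (Fin n))
    (hF : ContDiff ℝ 1 F)
    (hFbound : ∀ t ∈ Set.Icc (0:ℝ) T, ∀ y : EuclideanSpace ℝ (Fin n),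
      ‖fderiv ℝ (fun z => F (t, z)) y‖ ≤ L)
    (φ : ℝ × EuclideanSpace ℝ (Fin n) → EuclideanSpace ℝ (Fin n))
    (hφ0 : ∀ x, φ (0, x) = x)
    (hφt : ∀ t ∈ Set.Icc (0:ℝ) T, ∀ x : EuclideanSpace ℝ (Fin n),
      HasDerivAt (fun τ => φ (τ, x)) (F (t, φ (t, x))) t) :
    ∀ (x₀ : EuclideanSpace ℝ (Fin n)), ∀ t ∈ Set.Icc (0:ℝ) T,
      ‖fderiv ℝ (fun x => φ (t, x)) x₀‖ ≤ Real.exp (L * t) := by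
  intro x₀ t ht
  have hL : 0 ≤ L := (norm_nonneg _).trans (hFbound t ht x₀)
  have hlip : ∀ s ∈ Ico 0 T, LipschitzWith ⟨L, hL⟩ (fun z => F (s, z)) := fun s hs =>
    lipschitzWith_of_nnnorm_fderiv_le
      ((hF.differentiable one_ne_zero).comp ((differentiable_const s).prodMk differentiable_id))
      fun y => NNReal.coe_le_coe.mp (hFbound s (Ico_subset_Icc_self hs) y)
  refine norm_fderiv_le_of_lip' ℝ (Real.exp_nonneg _) (Filter.Eventually.of_forall fun x => ?_)
  rw [← dist_eq_norm, ← dist_eq_norm, mul_comm]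
  exact dist_flow_le_dist_mul_exp hlip hφt hφ0 ht x x₀

/-- Exponential bound on the derivative of a flow with respect to initial conditions: if
`‖∂F/∂x‖ ≤ L` on `[0,T] × ℝⁿ` and `φ` is the flow of `x' = F(t,x)`, then
`‖∂φ(t,·)/∂x‖ ≤ exp (L t)` for `t ∈ [0,T]`. -/
theorem flow_fderiv_exp_bound (n : ℕ) (T L : ℝ) (hT : 0 < T) (hL : 0 ≤ L)
    (F : ℝ × EuclideanSpace ℝ (Fin n) → EuclideanSpace ℝ (Fin n))
    (hF : ContDiff ℝ 1 F)
    (hFbound : ∀ t ∈ Set.Icc (0:ℝ) T, ∀ y : EuclideanSpace ℝ (Fin n),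
      ‖fderiv ℝ (fun z => F (t, z)) y‖ ≤ L)
    (φ : ℝ × EuclideanSpace ℝ (Fin n) → EuclideanSpace ℝ (Fin n))
    (hφ : ContDiff ℝ 1 φ)
    (hφ0 : ∀ x, φ (0, x) = x)
    (hφt : ∀ t ∈ Set.Icc (0:ℝ) T, ∀ x : EuclideanSpace ℝ (Fin n),
      HasDerivAt (fun τ => φ (τ, x)) (F (t, φ (t, x))) t) :
    ∀ (x₀ : EuclideanSpace ℝ (Fin n)), ∀ t ∈ Set.Icc (0:ℝ) T,
      ‖fderiv ℝ (fun x => φ (t, x)) x₀‖ ≤ Real.exp (L * t) :=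
  flow_fderiv_exp_bound_general n T L F hF hFbound φ hφ0 hφt
end
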